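/- arXiv:1709.08416 — 6 statements merged into one kernel-verified Lean document; each statement's English description precedes it below -/
import Mathlib

section
/- The partial composition on M-decorated cliques satisfies the parallel associativity axiom: for M-cliques p, q, r of sizes n, m, k and integers i < j in [n], one has (p ∘_i q) ∘_{j+m-1} r = (p ∘_j r) ∘_i q. -/
set_option maxHeartbeats 8000000


/-- An `M`-decorated clique, represented as a labeling function on 1-indexed pairs of
vertices; a clique of size `n` is such a function, read only on its arcs `(x, y)` with
`1 ≤ x < y ≤ n + 1`. -/
def MCliqueF (M : Type) : Type := ℕ → ℕ → M

/-- The partial composition `p ∘_i q`, where `q` has size `m`: the base of `q` is glued on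
the `i`-th edge of `p`, the glued arc `(i, i+m)` receives the label
`p (i, i+1) ⋆ q (1, m+1)`, labels of `p` and `q` are transported along the inclusions of
their vertices, and all mixed arcs receive the unit label. -/
def comp {M : Type} [MulOneClass M] (m : ℕ) (p q : MCliqueF M) (i : ℕ) : MCliqueF M :=
  fun x y =>
    if x = i ∧ y = i + m then p i (i + 1) * q 1 (m + 1)
    else if x ≤ i ∧ i + m ≤ y then p x (y - m + 1)
    else if y ≤ i then p x y
    else if i + m ≤ x then p (x - m + 1) (y - m + 1)
    else if i ≤ x ∧ y ≤ i + m then q (x - i + 1) (y - i + 1)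
    else 1

/-- Parallel associativity of the partial composition of `M`-decorated cliques:
for `p`, `q`, `r` of sizes `n`, `m`, `k` and `i < j` in `[n]`, the cliques
`(p ∘_i q) ∘_{j+m-1} r` and `(p ∘_j r) ∘_i q`, both of size `n + m + k - 2`, agree on all
their arcs. -/
theorem stmt5 (M : Type) [MulOneClass M] (n m k : ℕ) (hn : 1 ≤ n) (hm : 1 ≤ m)
    (hk : 1 ≤ k) (p q r : MCliqueF M) (i j : ℕ) (hi1 : 1 ≤ i) (hij : i < j)
    (hj2 : j ≤ n) :
    ∀ x y : ℕ, 1 ≤ x → x < y → y ≤ (n + m + k - 2) + 1 →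
      comp k (comp m p q i) r (j + m - 1) x y = comp m (comp k p r j) q i x y := by
  intro x y hx hxy hy
  set P := comp m p q i with hP
  set R := comp k p r j with hR
  simp only [comp]
  repeat' split
  all_goals try omega
  all_goals simp only [hP, hR, comp]
  all_goals repeat' split
  all_goals first
    | rfl
    | omega
    | (congr 1 <;> omega)
    | (congr 2 <;> omega)
end

section
/- Let M be a right-cancellable unitary magma. Then for every fixed M-clique q of size m and every i, the map p ↦ p ∘_i q from M-cliques of size n (with i ≤ n) to M-cliques of size n + m - 1 is injective. Conversely, if all these maps are injective then M is right cancellable. -/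
/-- `M` is right cancellable if and only if, for every fixed `M`-clique `q` of size `m`
and valid `i`, the map `p ↦ p ∘_i q` from `M`-cliques of size `n` to `M`-cliques of size
`n + m - 1` is injective (equality of cliques being agreement on all their arcs). -/
theorem stmt7 (M : Type) [MulOneClass M] :
    (∀ a b c : M, a * c = b * c → a = b) ↔
    (∀ n m : ℕ, 1 ≤ n → 1 ≤ m → ∀ q : MCliqueF M, ∀ i : ℕ, 1 ≤ i → i ≤ n →
      ∀ p p' : MCliqueF M,
        (∀ x y : ℕ, 1 ≤ x → x < y → y ≤ (n + m - 1) + 1 →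
          comp m p q i x y = comp m p' q i x y) →
        (∀ x y : ℕ, 1 ≤ x → x < y → y ≤ n + 1 → p x y = p' x y)) := by
  constructor
  · intro hc n m hn hm q i hi hin p p' h x y hx hxy hy
    by_cases hxi : x = i ∧ y = i + 1
    · obtain ⟨rfl, rfl⟩ := hxi
      have hh := h x (x + m) (by omega) (by omega) (by omega)
      simp only [comp] at hh
      split_ifs at hh <;>
        first
          | omega
          | exact hc _ _ _ hh
          | exact absurd (⟨trivial, trivial⟩ : True ∧ True) (by assumption)
    · by_cases hyi : y ≤ i
      · have hh := h x y hx hxy (by omega)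
        simp only [comp] at hh
        split_ifs at hh <;> first | omega | exact hh
      · by_cases hxi' : x ≤ i
        · have hh := h x (y + m - 1) hx (by omega) (by omega)
          simp only [comp] at hh
          split_ifs at hh <;> try omega
          convert hh using 2 <;> omega
        · have hh := h (x + m - 1) (y + m - 1) (by omega) (by omega) (by omega)
          simp only [comp] at hh
          split_ifs at hh <;> try omega
          convert hh using 2 <;> omega
  · intro hinj a b c hab
    have := hinj 1 1 le_rfl le_rfl (fun _ _ => c) 1 le_rfl le_rfl
      (fun _ _ => a) (fun _ _ => b) ?_ 1 2 le_rfl (by omega) (by omega)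
    · exact this
    · intro x y hx hxy hy
      have hx1 : x = 1 := by omega
      have hy2 : y = 2 := by omega
      subst hx1; subst hy2
      simp only [comp, if_pos (⟨rfl, rfl⟩ : (1:ℕ) = 1 ∧ (2:ℕ) = 1 + 1)]
      exact hab
end

section
/- The interval [p'', p] in the order ≼_d on M-cliques is Boolean: if p'' ≼_d p, then the set of M-cliques p' with p'' ≼_d p' ≼_d p is in bijection with subsets of the set of diagonals on which p'' and p differ; in particular this interval has cardinality 2^{ham(p'', p)}. -/
abbrev Arc (n : ℕ) : Type := {p : Fin (n+1) × Fin (n+1) // p.1 < p.2}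

def isBase {n : ℕ} (a : Arc n) : Prop := a.val.1.val = 0 ∧ a.val.2.val = n

def isEdge {n : ℕ} (a : Arc n) : Prop := a.val.2.val = a.val.1.val + 1 ∧ ¬ isBase a

def isDiagonal {n : ℕ} (a : Arc n) : Prop := ¬ isEdge a ∧ ¬ isBase a

abbrev MClique (M : Type) (n : ℕ) : Type := Arc n → M

def leD {M : Type} [MulOneClass M] {n : ℕ} (p' p : MClique M n) : Prop :=
  (∀ a : Arc n, ¬ isDiagonal a → p' a = p a) ∧
  (∀ a : Arc n, isDiagonal a → p' a = p a ∨ p' a = 1)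

/-- The Hamming distance between two `M`-cliques: the number of arcs where they differ. -/
noncomputable def ham {M : Type} {n : ℕ} (p' p : MClique M n) : ℕ :=
  Nat.card {a : Arc n // p' a ≠ p a}

/-- The interval `[p'', p]` in the order `≼_d` is Boolean: if `p'' ≼_d p`, the set of
cliques `p'` with `p'' ≼_d p' ≼_d p` is in bijection with the subsets of the set of arcs
on which `p''` and `p` differ; in particular it has cardinality `2 ^ ham(p'', p)`. -/
theorem stmt10 (M : Type) [MulOneClass M] (n : ℕ) (p'' p : MClique M n)
    (h : leD p'' p) :
    Nonempty ({p' : MClique M n // leD p'' p' ∧ leD p' p} ≃ Set {a : Arc n // p'' a ≠ p a}) ∧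
    Nat.card {p' : MClique M n // leD p'' p' ∧ leD p' p} = 2 ^ ham p'' p := by
  classical
  -- basic facts about differing arcs
  have hdiag : ∀ a : Arc n, p'' a ≠ p a → isDiagonal a := by
    intro a ha
    by_contra hd
    exact ha (h.1 a hd)
  have hone : ∀ a : Arc n, p'' a ≠ p a → p'' a = 1 := by
    intro a ha
    rcases h.2 a (hdiag a ha) with h1 | h1
    · exact absurd h1 ha
    · exact h1
  have hpne : ∀ a : Arc n, p'' a ≠ p a → p a ≠ 1 := by
    intro a ha hp
    exact ha ((hone a ha).trans hp.symm)
  -- the equivalence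
  let F : {p' : MClique M n // leD p'' p' ∧ leD p' p} → Set {a : Arc n // p'' a ≠ p a} :=
    fun q => {x | q.1 x.1 ≠ p x.1}
  let G : Set {a : Arc n // p'' a ≠ p a} → MClique M n :=
    fun S a => if hd : p'' a ≠ p a then (if ⟨a, hd⟩ ∈ S then 1 else p a) else p a
  have hGmem : ∀ S, leD p'' (G S) ∧ leD (G S) p := by
    intro S
    constructor
    · constructor
      · intro a hd
        have hEq : p'' a = p a := h.1 a hd
        simp [G, hEq]
      · intro a hd
        by_cases hne : p'' a ≠ p a
        · right
          have := hone a hne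
          simp [G, hne, this]
        · push_neg at hne
          simp [G, hne]
    · constructor
      · intro a hd
        have hEq : p'' a = p a := h.1 a hd
        have : ¬ (p'' a ≠ p a) := by simp [hEq]
        simp [G, this]
      · intro a _
        by_cases hne : p'' a ≠ p a
        · simp only [G, dif_pos hne]
          split <;> simp
        · simp [G, hne]
  have key : ∀ (q : MClique M n), leD p'' q ∧ leD q p →
      ∀ a : Arc n, ¬ (p'' a ≠ p a) → q a = p a := by
    intro q hq a ha
    push_neg at ha
    by_cases hd : isDiagonal a
    · rcases hq.1.2 a hd with h1 | h1
      · exact ha ▸ h1.symm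
      · rcases hq.2.2 a hd with h2 | h2
        · exact h2
        · rw [h2, ← h1, ha]
    · exact hq.2.1 a hd
  have keydash : ∀ (q : MClique M n), leD p'' q ∧ leD q p →
      ∀ a : Arc n, p'' a ≠ p a → q a ≠ p a → q a = 1 := by
    intro q hq a ha hne
    rcases hq.2.2 a (hdiag a ha) with h1 | h1
    · exact absurd h1 hne
    · exact h1
  let E : {p' : MClique M n // leD p'' p' ∧ leD p' p} ≃ Set {a : Arc n // p'' a ≠ p a} :=
    { toFun := F
      invFun := fun S => ⟨G S, hGmem S⟩
      left_inv := by
        intro q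
        ext a
        by_cases hne : p'' a ≠ p a
        · simp only [G, F, dif_pos hne, Set.mem_setOf_eq]
          by_cases hq : q.1 a ≠ p a
          · rw [if_pos hq, keydash q.1 q.2 a hne hq]
          · push_neg at hq
            rw [if_neg (by simpa using hq), hq]
        · simp only [G, F, dif_neg hne]
          exact (key q.1 q.2 a hne).symm
      right_inv := by
        intro S
        ext ⟨a, ha⟩
        simp only [F, G, Set.mem_setOf_eq, dif_pos ha]
        by_cases hs : (⟨a, ha⟩ : {a : Arc n // p'' a ≠ p a}) ∈ S
        · simp [hs, (hpne a ha).symm]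
        · simp [hs] }
  refine ⟨⟨E⟩, ?_⟩
  rw [Nat.card_congr E, ham]
  have : Fintype {a : Arc n // p'' a ≠ p a} := Fintype.ofFinite _
  rw [Nat.card_eq_fintype_card, Nat.card_eq_fintype_card, Fintype.card_set]
end

section
/- The number of D_0-decorated cliques of size n that are nesting-free equals the Catalan number C_{n+1}; the values for n = 2, 3, 4, 5 are 5, 14, 42, 132. -/
abbrev D0Clique (n : ℕ) : Type := Arc n → Bool

/-- Nesting-free: whenever a solid arc `(x', y')` is nested in a solid arc `(x, y)`
(that is `x ≤ x' < y' ≤ y`), the two arcs coincide. -/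
def NestingFree {n : ℕ} (p : D0Clique n) : Prop :=
  ∀ a b : Arc n, p a = true → p b = true →
    a.val.1 ≤ b.val.1 → b.val.2 ≤ a.val.2 → a = b

/-!
In a nesting-free clique the solid arcs, sorted by left endpoint, are also sorted by right
endpoint, so the clique is determined by the set `X` of left endpoints and the set `Y` of right
endpoints: the `k`-th left endpoint is joined to the `k`-th right endpoint. The pairs `(X, Y)`
arising this way are the ballot pairs: `|X| = |Y|`, and for every `t` at most as many points of
`Y` lie in `[0, t]` as points of `X` in `[0, t)`. Reading the points `0, …, n` in order and writing
for each point `t` first `D` or `U` according as `t ∈ Y` or not, then `U` or `D` according as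
`t ∈ X` or not, turns ballot pairs into Dyck words of semilength `n + 1`.
-/

open DyckStep Finset

namespace Nat

variable {p : ℕ → Prop} [DecidablePred p]

theorem count_succ_injective {s t : ℕ} (hs : p s) (ht : p t)
    (h : count p (s + 1) = count p (t + 1)) : s = t :=
  count_injective hs ht (by simpa [count_succ, hs, ht] using h)

theorem exists_count_succ_eq {r m : ℕ} (hr : 0 < r) (hm : r ≤ count p m) :
    ∃ j < m, p j ∧ count p (j + 1) = r := by
  induction m with
  | zero => rw [count_zero] at hm; omega
  | succ m ih =>
    by_cases h : r ≤ count p m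
    · obtain ⟨j, hj, hpj, hcj⟩ := ih h
      exact ⟨j, by omega, hpj, hcj⟩
    · have hpm : p m := by
        by_contra hpm
        rw [count_succ, if_neg hpm] at hm
        omega
      refine ⟨m, by omega, hpm, ?_⟩
      simp only [count_succ, hpm, if_true] at hm ⊢
      omega

theorem count_eq_card_filter_of_injOn {α : Type*} {S : Finset α} {e : α → ℕ}
    (hp : ∀ s, p s ↔ ∃ a ∈ S, e a = s) (he : Set.InjOn e S) (t : ℕ) :
    count p t = #{a ∈ S | e a < t} := by
  rw [count_eq_card_filter_range, ← Finset.card_image_of_injOn (he.mono (filter_subset _ _))]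
  congr 1
  ext s
  simp only [mem_filter, mem_range, mem_image, hp]
  constructor
  · rintro ⟨hst, a, ha, rfl⟩
    exact ⟨a, ⟨ha, hst⟩, rfl⟩
  · rintro ⟨a, ⟨ha, hat⟩, rfl⟩
    exact ⟨hat, a, ha, rfl⟩

end Nat

structure IsBallotPair (m : ℕ) (X Y : ℕ → Bool) : Prop where
  X_eq_false : ∀ s, m ≤ s → X s = false
  Y_eq_false : ∀ s, m ≤ s → Y s = false
  count_eq : Nat.count (X ·) m = Nat.count (Y ·) m
  count_succ_le : ∀ t < m, Nat.count (Y ·) (t + 1) ≤ Nat.count (X ·) t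

def ballotWord (X Y : ℕ → Bool) : ℕ → List DyckStep
  | 0 => []
  | t + 1 => ballotWord X Y t ++ [if Y t then D else U, if X t then U else D]

section BallotWord

variable {X Y : ℕ → Bool}

@[simp]
theorem length_ballotWord (t : ℕ) : (ballotWord X Y t).length = 2 * t := by
  induction t with
  | zero => rfl
  | succ t ih => simp only [ballotWord, List.length_append, ih, List.length_cons,
      List.length_nil]; omega

theorem count_U_ballotWord (t : ℕ) :
    (ballotWord X Y t).count U + Nat.count (Y ·) t = t + Nat.count (X ·) t := by
  induction t with
  | zero => rfl
  | succ t ih =>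
    rw [ballotWord, List.count_append, Nat.count_succ, Nat.count_succ]
    cases X t <;> cases Y t <;> simp <;> omega

theorem count_D_ballotWord (t : ℕ) :
    (ballotWord X Y t).count D + Nat.count (X ·) t = t + Nat.count (Y ·) t := by
  induction t with
  | zero => rfl
  | succ t ih =>
    rw [ballotWord, List.count_append, Nat.count_succ, Nat.count_succ]
    cases X t <;> cases Y t <;> simp <;> omega

theorem ballotWord_prefix {t m : ℕ} (h : t ≤ m) : ballotWord X Y t <+: ballotWord X Y m := by
  induction m, h using Nat.le_induction with
  | base => exact List.prefix_refl _
  | succ m _ ih => exact ih.trans (List.prefix_append _ _)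

theorem take_two_mul_ballotWord {t m : ℕ} (h : t ≤ m) :
    (ballotWord X Y m).take (2 * t) = ballotWord X Y t := by
  simpa using (List.prefix_iff_eq_take.mp (ballotWord_prefix (X := X) (Y := Y) h)).symm

theorem take_two_mul_add_one_ballotWord {t m : ℕ} (h : t < m) :
    (ballotWord X Y m).take (2 * t + 1) = ballotWord X Y t ++ [if Y t then D else U] := by
  rw [← Nat.min_eq_left (by omega : 2 * t + 1 ≤ 2 * (t + 1)), ← List.take_take,
    take_two_mul_ballotWord (show t + 1 ≤ m by omega), ballotWord,
    List.take_append]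
  simp

theorem getElem?_ballotWord_two_mul {t m : ℕ} (h : t < m) :
    (ballotWord X Y m)[2 * t]? = some (if Y t then D else U) := by
  rw [← List.getElem?_take_of_lt (by omega : 2 * t < 2 * t + 1),
    take_two_mul_add_one_ballotWord h, List.getElem?_append_right (by simp)]
  simp

theorem getElem?_ballotWord_two_mul_add_one {t m : ℕ} (h : t < m) :
    (ballotWord X Y m)[2 * t + 1]? = some (if X t then U else D) := by
  rw [← List.getElem?_take_of_lt (by omega : 2 * t + 1 < 2 * (t + 1)),
    take_two_mul_ballotWord (show t + 1 ≤ m by omega), ballotWord,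
    List.getElem?_append_right (by simp)]
  simp

end BallotWord

namespace IsBallotPair

variable {m : ℕ} {X Y : ℕ → Bool}

theorem count_D_le_count_U_take (h : IsBallotPair m X Y) (i : ℕ) :
    ((ballotWord X Y m).take i).count D ≤ ((ballotWord X Y m).take i).count U := by
  wlog hi : i ≤ 2 * m generalizing i
  · simpa [List.take_of_length_le, show 2 * m ≤ i by omega] using this (2 * m) le_rfl
  have hU := count_U_ballotWord (X := X) (Y := Y)
  have hD := count_D_ballotWord (X := X) (Y := Y)
  obtain ⟨t, rfl | rfl⟩ := Nat.even_or_odd' i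
  · have hle : Nat.count (Y ·) t ≤ Nat.count (X ·) t := by
      rcases (by omega : t = m ∨ t < m) with rfl | ht
      · exact h.count_eq.ge
      · exact (Nat.count_monotone _ t.le_succ).trans (h.count_succ_le t ht)
    rw [take_two_mul_ballotWord (by omega)]
    linarith [hU t, hD t]
  · have ht : t < m := by omega
    have hle := h.count_succ_le t ht
    rw [take_two_mul_add_one_ballotWord ht]
    rw [Nat.count_succ] at hle
    specialize hU t
    specialize hD t
    cases hY : Y t <;> simp [hY] at hle ⊢ <;> omega

def toDyckWord (h : IsBallotPair m X Y) : DyckWord where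
  toList := ballotWord X Y m
  count_U_eq_count_D := by
    linarith [count_U_ballotWord (X := X) (Y := Y) m, count_D_ballotWord (X := X) (Y := Y) m,
      h.count_eq]
  count_D_le_count_U := h.count_D_le_count_U_take

theorem semilength_toDyckWord (h : IsBallotPair m X Y) : h.toDyckWord.semilength = m := by
  have := count_U_ballotWord (X := X) (Y := Y) m
  rw [h.count_eq] at this
  exact Nat.add_right_cancel this

theorem of_ballotWord (hX : ∀ s, m ≤ s → X s = false) (hY : ∀ s, m ≤ s → Y s = false)
    (w : DyckWord) (hw : w.toList = ballotWord X Y m) : IsBallotPair m X Y where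
  X_eq_false := hX
  Y_eq_false := hY
  count_eq := by
    have hUD := w.count_U_eq_count_D
    rw [hw] at hUD
    linarith [count_U_ballotWord (X := X) (Y := Y) m, count_D_ballotWord (X := X) (Y := Y) m]
  count_succ_le t ht := by
    have hDU := w.count_D_le_count_U (2 * t + 1)
    rw [hw, take_two_mul_add_one_ballotWord ht] at hDU
    have hU := count_U_ballotWord (X := X) (Y := Y) t
    have hD := count_D_ballotWord (X := X) (Y := Y) t
    rw [Nat.count_succ]
    cases hYt : Y t <;> simp [hYt] at hDU ⊢ <;> omega

end IsBallotPair

-- Positions beyond the end of the word read as `false`.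
def oddUp (w : List DyckStep) (t : ℕ) : Bool := w[2 * t + 1]? = some U

def evenDown (w : List DyckStep) (t : ℕ) : Bool := w[2 * t]? = some D

theorem ballotWord_oddUp_evenDown {w : List DyckStep} {m : ℕ} (hw : w.length = 2 * m) :
    ballotWord (oddUp w) (evenDown w) m = w := by
  refine List.ext_getElem? fun i => ?_
  obtain ⟨t, rfl | rfl⟩ := Nat.even_or_odd' i
  · by_cases ht : t < m
    · obtain ⟨x, hx⟩ : ∃ x, w[2 * t]? = some x := ⟨_, List.getElem?_eq_getElem (by omega)⟩
      rw [getElem?_ballotWord_two_mul ht, hx]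
      cases x <;> simp [evenDown, hx]
    · rw [List.getElem?_eq_none (by simp; omega), List.getElem?_eq_none (by omega)]
  · by_cases ht : t < m
    · obtain ⟨x, hx⟩ : ∃ x, w[2 * t + 1]? = some x := ⟨_, List.getElem?_eq_getElem (by omega)⟩
      rw [getElem?_ballotWord_two_mul_add_one ht, hx]
      cases x <;> simp [oddUp, hx]
    · rw [List.getElem?_eq_none (by simp; omega), List.getElem?_eq_none (by omega)]

section

variable {m : ℕ} {X Y : ℕ → Bool}

theorem oddUp_ballotWord (h : IsBallotPair m X Y) : oddUp (ballotWord X Y m) = X := by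
  funext s
  by_cases hs : s < m
  · cases hX : X s <;> simp [oddUp, getElem?_ballotWord_two_mul_add_one hs, hX]
  · rw [h.X_eq_false s (by omega), oddUp, List.getElem?_eq_none (by simp; omega)]
    simp

theorem evenDown_ballotWord (h : IsBallotPair m X Y) : evenDown (ballotWord X Y m) = Y := by
  funext s
  by_cases hs : s < m
  · cases hY : Y s <;> simp [evenDown, getElem?_ballotWord_two_mul hs, hY]
  · rw [h.Y_eq_false s (by omega), evenDown, List.getElem?_eq_none (by simp; omega)]
    simp

end

theorem DyckWord.isBallotPair_oddUp_evenDown {m : ℕ} (w : DyckWord) (hw : w.semilength = m) :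
    IsBallotPair m (oddUp w.toList) (evenDown w.toList) := by
  have hlen := hw ▸ w.two_mul_semilength_eq_length
  refine .of_ballotWord (fun s hs => ?_) (fun s hs => ?_) w
    (ballotWord_oddUp_evenDown hlen.symm).symm
  · simp [oddUp, List.getElem?_eq_none (by omega : w.toList.length ≤ 2 * s + 1)]
  · simp [evenDown, List.getElem?_eq_none (by omega : w.toList.length ≤ 2 * s)]

def ballotPairEquivDyckWord (m : ℕ) :
    {XY : (ℕ → Bool) × (ℕ → Bool) // IsBallotPair m XY.1 XY.2} ≃
      {w : DyckWord // w.semilength = m} where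
  toFun XY := ⟨XY.2.toDyckWord, XY.2.semilength_toDyckWord⟩
  invFun w := ⟨(oddUp w.1.toList, evenDown w.1.toList), w.1.isBallotPair_oddUp_evenDown w.2⟩
  left_inv := fun ⟨_, h⟩ =>
    Subtype.ext (Prod.ext (oddUp_ballotWord h) (evenDown_ballotWord h))
  right_inv := fun ⟨w, hw⟩ => Subtype.ext (DyckWord.ext (ballotWord_oddUp_evenDown
    (hw ▸ w.two_mul_semilength_eq_length).symm))

section Clique

variable {n : ℕ}

def solidArcs (p : D0Clique n) : Finset (Arc n) := {a | p a = true}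

@[simp]
theorem mem_solidArcs {p : D0Clique n} {a : Arc n} : a ∈ solidArcs p ↔ p a = true := by
  simp [solidArcs]

def leftEnds (p : D0Clique n) (t : ℕ) : Bool := decide (∃ a ∈ solidArcs p, (a.1.1 : ℕ) = t)

def rightEnds (p : D0Clique n) (t : ℕ) : Bool := decide (∃ a ∈ solidArcs p, (a.1.2 : ℕ) = t)

namespace NestingFree

variable {p : D0Clique n}

theorem fst_le_iff_snd_le (hp : NestingFree p) {a b : Arc n} (ha : p a = true)
    (hb : p b = true) : a.1.1 ≤ b.1.1 ↔ a.1.2 ≤ b.1.2 :=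
  ⟨fun h => not_lt.mp fun hlt => hlt.ne' (congrArg (·.1.2) (hp a b ha hb h hlt.le)),
    fun h => not_lt.mp fun hlt => hlt.ne (congrArg (·.1.1) (hp b a hb ha hlt.le h))⟩

theorem injOn_fst (hp : NestingFree p) :
    Set.InjOn (fun a : Arc n => (a.1.1 : ℕ)) (solidArcs p) := by
  intro a ha b hb hab
  rw [mem_coe, mem_solidArcs] at ha hb
  have hfst : a.1.1 = b.1.1 := Fin.ext hab
  exact Subtype.ext (Prod.ext hfst (le_antisymm ((hp.fst_le_iff_snd_le ha hb).mp hfst.le)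
    ((hp.fst_le_iff_snd_le hb ha).mp hfst.ge)))

theorem injOn_snd (hp : NestingFree p) :
    Set.InjOn (fun a : Arc n => (a.1.2 : ℕ)) (solidArcs p) := by
  intro a ha b hb hab
  rw [mem_coe, mem_solidArcs] at ha hb
  have hsnd : a.1.2 = b.1.2 := Fin.ext hab
  exact Subtype.ext (Prod.ext (le_antisymm ((hp.fst_le_iff_snd_le ha hb).mpr hsnd.le)
    ((hp.fst_le_iff_snd_le hb ha).mpr hsnd.ge)) hsnd)

theorem count_leftEnds (hp : NestingFree p) (t : ℕ) :
    Nat.count (leftEnds p ·) t = #{a ∈ solidArcs p | (a.1.1 : ℕ) < t} :=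
  Nat.count_eq_card_filter_of_injOn (fun _ => by simp [leftEnds]) hp.injOn_fst t

theorem count_rightEnds (hp : NestingFree p) (t : ℕ) :
    Nat.count (rightEnds p ·) t = #{a ∈ solidArcs p | (a.1.2 : ℕ) < t} :=
  Nat.count_eq_card_filter_of_injOn (fun _ => by simp [rightEnds]) hp.injOn_snd t

theorem count_leftEnds_eq_count_rightEnds (hp : NestingFree p) {a : Arc n}
    (ha : p a = true) :
    Nat.count (leftEnds p ·) (a.1.1 + 1) = Nat.count (rightEnds p ·) (a.1.2 + 1) := by
  rw [hp.count_leftEnds, hp.count_rightEnds]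
  congr 1
  refine filter_congr fun b hb => ?_
  have := hp.fst_le_iff_snd_le (mem_solidArcs.mp hb) ha
  rw [Fin.le_def, Fin.le_def] at this
  omega

theorem isBallotPair (hp : NestingFree p) :
    IsBallotPair (n + 1) (leftEnds p) (rightEnds p) where
  X_eq_false s hs := by
    simp only [leftEnds, decide_eq_false_iff_not, not_exists, not_and]
    intro a _ has
    exact absurd a.1.1.isLt (by omega)
  Y_eq_false s hs := by
    simp only [rightEnds, decide_eq_false_iff_not, not_exists, not_and]
    intro a _ has
    exact absurd a.1.2.isLt (by omega)
  count_eq := by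
    rw [hp.count_leftEnds, hp.count_rightEnds, filter_true_of_mem (fun a _ => a.1.1.isLt),
      filter_true_of_mem (fun a _ => a.1.2.isLt)]
  count_succ_le t _ := by
    rw [hp.count_leftEnds, hp.count_rightEnds]
    refine card_le_card (monotone_filter_right _ fun a h => ?_)
    have := a.2
    rw [Fin.lt_def] at this
    omega

end NestingFree

def cliqueOfBallot (n : ℕ) (X Y : ℕ → Bool) : D0Clique n := fun a =>
  X a.1.1 && Y a.1.2 && Nat.count (X ·) (a.1.1 + 1) == Nat.count (Y ·) (a.1.2 + 1)

@[simp]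
theorem cliqueOfBallot_eq_true {X Y : ℕ → Bool} {a : Arc n} :
    cliqueOfBallot n X Y a = true ↔ X a.1.1 = true ∧ Y a.1.2 = true ∧
      Nat.count (X ·) (a.1.1 + 1) = Nat.count (Y ·) (a.1.2 + 1) := by
  simp [cliqueOfBallot, and_assoc]

theorem nestingFree_cliqueOfBallot (X Y : ℕ → Bool) : NestingFree (cliqueOfBallot n X Y) := by
  intro a b ha hb hfst hsnd
  rw [cliqueOfBallot_eq_true] at ha hb
  rw [Fin.le_def] at hfst hsnd
  have hX := Nat.count_monotone (X ·) (by omega : (a.1.1 : ℕ) + 1 ≤ b.1.1 + 1)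
  have hY := Nat.count_monotone (Y ·) (by omega : (b.1.2 : ℕ) + 1 ≤ a.1.2 + 1)
  have h1 := Nat.count_succ_injective (p := (X ·)) ha.1 hb.1 (by omega)
  have h2 := Nat.count_succ_injective (p := (Y ·)) ha.2.1 hb.2.1 (by omega)
  exact Subtype.ext (Prod.ext (Fin.ext h1) (Fin.ext h2))

theorem NestingFree.cliqueOfBallot_leftEnds_rightEnds {p : D0Clique n} (hp : NestingFree p) :
    cliqueOfBallot n (leftEnds p) (rightEnds p) = p := by
  funext a
  rw [Bool.eq_iff_iff, cliqueOfBallot_eq_true]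
  constructor
  · rintro ⟨hX, hY, hcount⟩
    obtain ⟨c, hc, hca⟩ : ∃ c ∈ solidArcs p, (c.1.1 : ℕ) = a.1.1 := of_decide_eq_true hX
    have hcY : rightEnds p c.1.2 = true := decide_eq_true ⟨c, hc, rfl⟩
    rw [mem_solidArcs] at hc
    have := hp.count_leftEnds_eq_count_rightEnds hc
    rw [hca, hcount] at this
    have hsnd := Nat.count_succ_injective hcY hY this.symm
    rwa [← Subtype.ext (Prod.ext (Fin.ext hca) (Fin.ext hsnd))]
  · intro ha
    have ha' := mem_solidArcs.mpr ha
    refine ⟨decide_eq_true ⟨a, ha', rfl⟩, decide_eq_true ⟨a, ha', rfl⟩,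
      hp.count_leftEnds_eq_count_rightEnds ha⟩

namespace IsBallotPair

variable {X Y : ℕ → Bool}

theorem leftEnds_cliqueOfBallot (h : IsBallotPair (n + 1) X Y) :
    leftEnds (cliqueOfBallot n X Y) = X := by
  funext t
  rw [Bool.eq_iff_iff, leftEnds, decide_eq_true_iff]
  constructor
  · rintro ⟨a, ha, rfl⟩
    exact (cliqueOfBallot_eq_true.mp (mem_solidArcs.mp ha)).1
  · intro hXt
    have ht : t < n + 1 := by
      by_contra ht
      simp [h.X_eq_false t (by omega)] at hXt
    have hpos : 0 < Nat.count (X ·) (t + 1) := by simp [Nat.count_succ, hXt]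
    obtain ⟨j, hj, hYj, hcount⟩ := Nat.exists_count_succ_eq hpos
      (h.count_eq ▸ Nat.count_monotone _ ht)
    have htj : t < j := by
      have hle := h.count_succ_le t ht
      have hsucc := Nat.count_succ_eq_succ_count_iff (p := (X ·)) |>.mpr hXt
      have := Nat.lt_of_count_lt_count (p := (Y ·)) (a := t + 1) (b := j + 1) (by omega)
      omega
    exact ⟨⟨(⟨t, ht⟩, ⟨j, hj⟩), Fin.lt_def.mpr htj⟩, by simp [hXt, hYj, hcount], rfl⟩

theorem rightEnds_cliqueOfBallot (h : IsBallotPair (n + 1) X Y) :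
    rightEnds (cliqueOfBallot n X Y) = Y := by
  funext t
  rw [Bool.eq_iff_iff, rightEnds, decide_eq_true_iff]
  constructor
  · rintro ⟨a, ha, rfl⟩
    exact (cliqueOfBallot_eq_true.mp (mem_solidArcs.mp ha)).2.1
  · intro hYt
    have ht : t < n + 1 := by
      by_contra ht
      simp [h.Y_eq_false t (by omega)] at hYt
    have hpos : 0 < Nat.count (Y ·) (t + 1) := by simp [Nat.count_succ, hYt]
    obtain ⟨i, hi, hXi, hcount⟩ := Nat.exists_count_succ_eq hpos (h.count_succ_le t ht)
    exact ⟨⟨(⟨i, by omega⟩, ⟨t, ht⟩), Fin.lt_def.mpr hi⟩, by simp [hXi, hYt, hcount], rfl⟩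

end IsBallotPair

end Clique

def nestingFreeEquivBallotPair (n : ℕ) :
    {p : D0Clique n // NestingFree p} ≃
      {XY : (ℕ → Bool) × (ℕ → Bool) // IsBallotPair (n + 1) XY.1 XY.2} where
  toFun p := ⟨(leftEnds p.1, rightEnds p.1), p.2.isBallotPair⟩
  invFun XY := ⟨cliqueOfBallot n XY.1.1 XY.1.2, nestingFree_cliqueOfBallot _ _⟩
  left_inv p := Subtype.ext (by dsimp only; exact p.2.cliqueOfBallot_leftEnds_rightEnds)
  right_inv := fun ⟨_, h⟩ =>
    Subtype.ext (Prod.ext h.leftEnds_cliqueOfBallot h.rightEnds_cliqueOfBallot)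

theorem card_nestingFree (n : ℕ) :
    Nat.card {p : D0Clique n // NestingFree p} = catalan (n + 1) := by
  rw [Nat.card_congr ((nestingFreeEquivBallotPair n).trans (ballotPairEquivDyckWord (n + 1))),
    Nat.card_eq_fintype_card, DyckWord.card_dyckWord_semilength_eq_catalan]

/-- The number of nesting-free `D₀`-decorated cliques of size `n` equals the Catalan
number `C_{n+1}`; the values for `n = 2, 3, 4, 5` are `5, 14, 42, 132`. -/
theorem stmt15 :
    (∀ n : ℕ, 1 ≤ n →
      Nat.card {p : D0Clique n // NestingFree p} = catalan (n + 1)) ∧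
    Nat.card {p : D0Clique 2 // NestingFree p} = 5 ∧
    Nat.card {p : D0Clique 3 // NestingFree p} = 14 ∧
    Nat.card {p : D0Clique 4 // NestingFree p} = 42 ∧
    Nat.card {p : D0Clique 5 // NestingFree p} = 132 := by
  refine ⟨fun n _ => card_nestingFree n, ?_, ?_, ?_, ?_⟩ <;>
    rw [card_nestingFree, catalan_eq_centralBinom_div] <;> decide
end

section
/- The number of matchings (sets of pairwise non-adjacent edges) of the cycle graph C_k on k ≥ 3 vertices equals the Lucas number L_k, where L_1 = 1, L_2 = 3, and L_k = L_{k-1} + L_{k-2}. -/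
/-- Lucas numbers: `L 1 = 1`, `L 2 = 3`, `L k = L (k-1) + L (k-2)` (so `L 0 = 2`). -/
def lucas : ℕ → ℕ
  | 0 => 2
  | 1 => 1
  | k + 2 => lucas (k + 1) + lucas k

/-- The cycle graph on `Fin k`: `x` and `y` are adjacent when they are distinct and
consecutive modulo `k`. For `k ≥ 3` this is the cycle with edges `{i, i+1}` together
with `{1, k}` (in `1`-indexed notation). -/
def cycleGraph (k : ℕ) : SimpleGraph (Fin k) where
  Adj x y := x ≠ y ∧ ((x.val + 1) % k = y.val ∨ (y.val + 1) % k = x.val)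
  symm := by
    constructor
    rintro x y ⟨hne, h⟩
    exact ⟨hne.symm, h.symm⟩
  loopless := ⟨fun x h => h.1 rfl⟩

/-!
Sending the edge `{i, i + 1}` of `C_k` to `i` identifies the matchings of `C_k` with the subsets
of `ℤ/k` containing no two cyclically consecutive elements. Such a subset of `{0, …, k - 1}`
either avoids `k - 1`, and is then a subset of `{0, …, k - 2}` with no two consecutive elements,
or contains `k - 1`, and then minus `k - 1` it is such a subset of `{1, …, k - 3}`. Removing the
top element shows that an interval of `n` integers has `F (n + 2)` subsets without two consecutive
elements, so the count is `F (k + 1) + F (k - 1) = L k`.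
-/

open Finset Nat

theorem Finset.card_filter_powerset_insert {α : Type*} [DecidableEq α] (p : Finset α → Prop)
    [DecidablePred p] {s : Finset α} {a : α} (ha : a ∉ s) :
    #((insert a s).powerset.filter p) =
      #(s.powerset.filter p) + #(s.powerset.filter fun t => p (insert a t)) := by
  simp only [card_filter]
  exact sum_powerset_insert ha _

theorem Finset.natCard_subset_map_univ {α β : Type*} [Fintype α] (f : α ↪ β)
    (P : Finset β → Prop) :
    Nat.card {s : Finset β // s ⊆ univ.map f ∧ P s} = Nat.card {t : Finset α // P (t.map f)} := by
  refine (Nat.card_congr (Equiv.ofBijective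
    (fun t => ⟨t.1.map f, map_subset_map.2 (subset_univ _), t.2⟩) ⟨?_, ?_⟩)).symm
  · intro t u h
    exact Subtype.ext (map_injective f (congrArg Subtype.val h))
  · rintro ⟨s, hs, hP⟩
    obtain ⟨t, -, rfl⟩ := subset_map_iff.1 hs
    exact ⟨⟨t, hP⟩, rfl⟩

def IsSparse (S : Finset ℕ) : Prop := ∀ i ∈ S, i + 1 ∉ S

instance : DecidablePred IsSparse := fun S => inferInstanceAs (Decidable (∀ i ∈ S, i + 1 ∉ S))

theorem isSparse_insert_add_one_iff {S : Finset ℕ} {b : ℕ} (hS : ∀ x ∈ S, x ≤ b) :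
    IsSparse (insert (b + 1) S) ↔ IsSparse S ∧ b ∉ S := by
  have hb1 : b + 1 ∉ S := fun h => by have := hS _ h; omega
  have hb2 : b + 2 ∉ S := fun h => by have := hS _ h; omega
  simp only [IsSparse, mem_insert]
  grind

theorem not_isSparse_insert_add_one_insert (S : Finset ℕ) (b : ℕ) :
    ¬ IsSparse (insert (b + 1) (insert b S)) :=
  fun h => h b (by simp) (by simp)

theorem card_filter_isSparse_Ico (a : ℕ) :
    ∀ n, #((Ico a (a + n)).powerset.filter IsSparse) = fib (n + 2)
  | 0 => by simp [filter_singleton, IsSparse]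
  | 1 => by
    rw [Nat.Ico_succ_singleton, ← insert_empty, card_filter_powerset_insert _ (notMem_empty a)]
    simp [filter_singleton, IsSparse, fib_add_two]
  | n + 2 => by
    have hIco : Ico a (a + (n + 2)) = insert (a + n + 1) (insert (a + n) (Ico a (a + n))) := by
      rw [← Nat.Ico_succ_right_eq_insert_Ico (by omega),
        ← Nat.Ico_succ_right_eq_insert_Ico (by omega)]
      rfl
    have hlt : ∀ S ∈ (Ico a (a + n)).powerset, ∀ x ∈ S, x < a + n := fun S hS x hx =>
      (mem_Ico.1 (mem_powerset.1 hS hx)).2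
    have hsparse : ∀ S ∈ (Ico a (a + n)).powerset,
        IsSparse (insert (a + n + 1) S) ↔ IsSparse S := fun S hS =>
      (isSparse_insert_add_one_iff fun x hx => (hlt S hS x hx).le).trans
        (and_iff_left fun h => (hlt S hS _ h).false)
    rw [hIco, card_filter_powerset_insert _ (by simp),
      card_filter_powerset_insert (fun t => IsSparse (insert (a + n + 1) t)) (by simp),
      ← Nat.Ico_succ_right_eq_insert_Ico (by omega), filter_congr hsparse,
      filter_false_of_mem fun S _ => not_isSparse_insert_add_one_insert S _,
      card_empty, add_zero, show (a + n).succ = a + (n + 1) from rfl,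
      card_filter_isSparse_Ico a (n + 1), card_filter_isSparse_Ico a n, fib_add_two (n := n + 2)]
    exact add_comm _ _

def IsCyclicallySparse (k : ℕ) (S : Finset ℕ) : Prop := ∀ i ∈ S, (i + 1) % k ∉ S

instance (k : ℕ) : DecidablePred (IsCyclicallySparse k) := fun S =>
  inferInstanceAs (Decidable (∀ i ∈ S, (i + 1) % k ∉ S))

theorem isCyclicallySparse_iff {k : ℕ} {S : Finset ℕ} (hS : S ⊆ range (k + 1)) :
    IsCyclicallySparse (k + 1) S ↔ IsSparse S ∧ (k ∈ S → 0 ∉ S) := by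
  have hlt : ∀ i ∈ S, i < k + 1 := fun i hi => mem_range.1 (hS hi)
  constructor
  · intro h
    refine ⟨fun i hi hi1 => h i hi ?_, fun hk h0 => h k hk (by rwa [Nat.mod_self])⟩
    rwa [Nat.mod_eq_of_lt (hlt _ hi1)]
  · rintro ⟨hsparse, hwrap⟩ i hi
    rcases Nat.lt_succ_iff_lt_or_eq.1 (hlt i hi) with hik | rfl
    · rw [Nat.mod_eq_of_lt (by omega)]
      exact hsparse i hi
    · rw [Nat.mod_self]
      exact hwrap hi

theorem card_filter_isCyclicallySparse_range (n : ℕ) :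
    #((range (n + 3)).powerset.filter (IsCyclicallySparse (n + 3))) =
      fib (n + 4) + fib (n + 2) := by
  have hwrap : (range (n + 2)).powerset.filter
      (fun S => IsSparse (insert (n + 2) S) ∧ (n + 2 ∈ insert (n + 2) S → 0 ∉ insert (n + 2) S)) =
      (Ico 1 (1 + n)).powerset.filter IsSparse := by
    ext S
    simp only [mem_filter, mem_powerset, mem_insert_self, true_implies]
    constructor
    · rintro ⟨hS, hsparse, hzero⟩
      have hle : ∀ x ∈ S, x ≤ n + 1 := fun x hx => Nat.lt_succ_iff.1 (mem_range.1 (hS hx))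
      obtain ⟨hsparse, hlast⟩ := (isSparse_insert_add_one_iff hle).1 hsparse
      refine ⟨fun x hx => mem_Ico.2 ⟨Nat.pos_of_ne_zero ?_, ?_⟩, hsparse⟩
      · rintro rfl
        exact hzero (mem_insert_of_mem hx)
      · have := hle x hx
        have : x ≠ n + 1 := by rintro rfl; exact hlast hx
        omega
    · rintro ⟨hS, hsparse⟩
      have hIco : ∀ x ∈ S, 1 ≤ x ∧ x < 1 + n := fun x hx => mem_Ico.1 (hS hx)
      refine ⟨fun x hx => mem_range.2 (by have := hIco x hx; omega),
        (isSparse_insert_add_one_iff fun x hx => by have := hIco x hx; omega).2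
          ⟨hsparse, fun h => by have := hIco _ h; omega⟩, ?_⟩
      rw [mem_insert, not_or]
      exact ⟨by omega, fun h => by have := hIco 0 h; omega⟩
  rw [filter_congr fun S hS => isCyclicallySparse_iff (mem_powerset.1 hS), range_add_one,
    card_filter_powerset_insert _ notMem_range_self, hwrap, card_filter_isSparse_Ico 1 n,
    filter_congr fun S hS => and_iff_left fun h => absurd (mem_powerset.1 hS h) notMem_range_self]
  have hline := card_filter_isSparse_Ico 0 (n + 2)
  rw [zero_add, ← range_eq_Ico] at hline
  rw [hline]

theorem Fin.val_add_one_eq_mod {k : ℕ} [NeZero k] (i : Fin k) :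
    ((i + 1 : Fin k) : ℕ) = (i + 1) % k := by
  rw [Fin.val_add, Fin.val_one', Nat.add_mod_mod]

theorem Fin.add_one_ne_self {k : ℕ} [NeZero k] (hk : 2 ≤ k) (i : Fin k) : i + 1 ≠ i := by
  rw [Ne, add_eq_left, Fin.ext_iff, Fin.val_one', Fin.val_zero, Nat.mod_eq_of_lt hk]
  exact one_ne_zero

theorem Fin.add_one_add_one_ne_self {k : ℕ} [NeZero k] (hk : 3 ≤ k) (i : Fin k) :
    i + 1 + 1 ≠ i := by
  rw [Ne, add_assoc, add_eq_left, Fin.ext_iff, Fin.val_add, Fin.val_one', Fin.val_zero,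
    Nat.mod_eq_of_lt (by omega : 1 < k), Nat.mod_eq_of_lt (by omega : 1 + 1 < k)]
  exact two_ne_zero

theorem isCyclicallySparse_map_valEmbedding {k : ℕ} [NeZero k] (T : Finset (Fin k)) :
    IsCyclicallySparse k (T.map Fin.valEmbedding) ↔ ∀ i ∈ T, i + 1 ∉ T := by
  rw [IsCyclicallySparse, forall_mem_map]
  simp only [mem_map, Fin.valEmbedding_apply, ← Fin.val_add_one_eq_mod, Fin.val_inj,
    exists_eq_right]

theorem natCard_fin_eq_card_filter_isCyclicallySparse (k : ℕ) [NeZero k] :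
    Nat.card {T : Finset (Fin k) // ∀ i ∈ T, i + 1 ∉ T} =
      #((range k).powerset.filter (IsCyclicallySparse k)) := by
  rw [← Nat.card_eq_finsetCard, ← Nat.Iio_eq_range, ← Fin.map_valEmbedding_univ]
  simp_rw [mem_filter, mem_powerset]
  rw [natCard_subset_map_univ]
  simp_rw [isCyclicallySparse_map_valEmbedding]

def cycleEdge {k : ℕ} [NeZero k] (i : Fin k) : Sym2 (Fin k) := s(i, i + 1)

theorem cycleEdge_injective {k : ℕ} [NeZero k] (hk : 3 ≤ k) :
    Function.Injective (cycleEdge (k := k)) := by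
  intro i j h
  rcases Sym2.eq_iff.1 h with ⟨hij, -⟩ | ⟨hij, rfl⟩
  · exact hij
  · exact absurd hij.symm (Fin.add_one_add_one_ne_self hk i)

theorem cycleGraph_adj_iff {k : ℕ} [NeZero k] (hk : 2 ≤ k) {x y : Fin k} :
    (cycleGraph k).Adj x y ↔ y = x + 1 ∨ x = y + 1 := by
  have hsucc (a b : Fin k) : (a.val + 1) % k = b.val ↔ b = a + 1 := by
    rw [Fin.ext_iff, Fin.val_add_one_eq_mod, eq_comm]
  change x ≠ y ∧ _ ↔ _
  rw [hsucc, hsucc]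
  constructor
  · exact fun h => h.2
  · rintro (rfl | rfl)
    · exact ⟨(Fin.add_one_ne_self hk x).symm, Or.inl rfl⟩
    · exact ⟨Fin.add_one_ne_self hk y, Or.inr rfl⟩

theorem cycleGraph_edgeSet {k : ℕ} [NeZero k] (hk : 2 ≤ k) :
    (cycleGraph k).edgeSet = Set.range cycleEdge := by
  ext e
  induction e using Sym2.ind with
  | _ x y =>
    rw [SimpleGraph.mem_edgeSet, cycleGraph_adj_iff hk, Set.mem_range]
    simp only [cycleEdge, Sym2.eq_iff]
    constructor
    · rintro (rfl | rfl)
      · exact ⟨x, Or.inl ⟨rfl, rfl⟩⟩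
      · exact ⟨y, Or.inr ⟨rfl, rfl⟩⟩
    · rintro ⟨i, ⟨rfl, rfl⟩ | ⟨rfl, rfl⟩⟩
      · exact Or.inl rfl
      · exact Or.inr rfl

def IsVertexDisjoint {V : Type*} (s : Finset (Sym2 V)) : Prop :=
  ∀ e ∈ s, ∀ f ∈ s, e ≠ f → ∀ v : V, v ∈ e → v ∉ f

theorem isVertexDisjoint_map_cycleEdge_iff {k : ℕ} [NeZero k] (hk : 3 ≤ k)
    (T : Finset (Fin k)) :
    IsVertexDisjoint (T.map ⟨cycleEdge, cycleEdge_injective hk⟩) ↔ ∀ i ∈ T, i + 1 ∉ T := by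
  simp only [IsVertexDisjoint, forall_mem_map, Function.Embedding.coeFn_mk,
    (cycleEdge_injective hk).ne_iff]
  constructor
  · intro h i hi hi1
    exact h i hi (i + 1) hi1 (Fin.add_one_ne_self (by omega) i).symm (i + 1)
      (Sym2.mem_mk_right _ _) (Sym2.mem_mk_left _ _)
  · intro hT i hi j hj hij v hvi hvj
    simp only [cycleEdge, Sym2.mem_iff] at hvi hvj
    rcases hvi with rfl | rfl <;> rcases hvj with hvj | hvj
    · exact hij hvj
    · exact hT j hj (hvj ▸ hi)
    · exact hT i hi (hvj ▸ hj)
    · exact hij (add_right_cancel hvj)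

theorem natCard_matchings_cycleGraph {k : ℕ} [NeZero k] (hk : 3 ≤ k) :
    Nat.card {s : Finset (Sym2 (Fin k)) //
      (∀ e ∈ s, e ∈ (cycleGraph k).edgeSet) ∧ IsVertexDisjoint s} =
      Nat.card {T : Finset (Fin k) // ∀ i ∈ T, i + 1 ∉ T} := by
  have hedges (s : Finset (Sym2 (Fin k))) : (∀ e ∈ s, e ∈ (cycleGraph k).edgeSet) ↔
      s ⊆ univ.map ⟨cycleEdge, cycleEdge_injective hk⟩ := by
    simp [subset_iff, cycleGraph_edgeSet (by omega : 2 ≤ k)]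
  simp_rw [hedges, natCard_subset_map_univ, isVertexDisjoint_map_cycleEdge_iff hk]

theorem lucas_add_one : ∀ n, lucas (n + 1) = fib (n + 2) + fib n
  | 0 => rfl
  | 1 => rfl
  | n + 2 => by
    rw [lucas, lucas_add_one (n + 1), lucas_add_one n, fib_add_two (n := n + 2),
      fib_add_two (n := n)]
    ring


/-- The number of matchings (sets of pairwise non-adjacent edges, including the empty
set) of the cycle graph `C_k` on `k ≥ 3` vertices equals the Lucas number `L_k`. -/
theorem stmt18 (k : ℕ) (hk : 3 ≤ k) :
    Nat.card {s : Finset (Sym2 (Fin k)) //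
      (∀ e ∈ s, e ∈ (cycleGraph k).edgeSet) ∧
      (∀ e ∈ s, ∀ f ∈ s, e ≠ f → ∀ v : Fin k, v ∈ e → v ∉ f)} = lucas k := by
  have : NeZero k := ⟨by omega⟩
  obtain ⟨n, rfl⟩ : ∃ n, k = n + 3 := ⟨k - 3, by omega⟩
  calc _ = Nat.card {T : Finset (Fin (n + 3)) // ∀ i ∈ T, i + 1 ∉ T} :=
        natCard_matchings_cycleGraph hk
    _ = #((range (n + 3)).powerset.filter (IsCyclicallySparse (n + 3))) :=
        natCard_fin_eq_card_filter_isCyclicallySparse _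
    _ = fib (n + 4) + fib (n + 2) := card_filter_isCyclicallySparse_range n
    _ = lucas (n + 3) := (lucas_add_one (n + 2)).symm
end

section
/- Let M be a finite unitary magma of cardinality m. The number of noncrossing configurations of size n in which every edge and the base is labeled by a pair (a, a) with a in M, and every solid diagonal is labeled by a pair (a, b) in M × M with a ≠ b, has ordinary generating series G(t) (with G coefficient 1 at t^1) satisfying t + (m-1)t^2 + (2m^2 t - 3mt + 2t - 1)G(t) + (m^3 - 2m^2 + 2m - 1)G(t)^2 = 0. -/
/-- Two arcs `(x, y)` and `(x', y')` cross when `x < x' < y < y'`. -/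
def crosses {n : ℕ} (a b : Arc n) : Prop :=
  a.val.1 < b.val.1 ∧ b.val.1 < a.val.2 ∧ a.val.2 < b.val.2

/-- An `M`-noncrossing configuration: an `M`-decorated clique in which no two solid
diagonals (diagonals labeled by a non-unit element) cross. -/
def IsNoncrossing {M : Type} [MulOneClass M] {n : ℕ} (p : MClique M n) : Prop :=
  ∀ a b : Arc n, isDiagonal a → isDiagonal b → p a ≠ 1 → p b ≠ 1 → ¬ crosses a b

/-- A noncrossing configuration with edges and base labeled by pairs `(a, a)` and solid
diagonals labeled by pairs `(a, b)` with `a ≠ b` (non-solid diagonals carry `none`). -/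
def IsDualConfig {M : Type} {n : ℕ} (p : Arc n → Option (M × M)) : Prop :=
  (∀ a : Arc n, ¬ isDiagonal a → ∃ c : M, p a = some (c, c)) ∧
  (∀ a : Arc n, isDiagonal a → ∀ x y : M, p a = some (x, y) → x ≠ y) ∧
  (∀ a b : Arc n, isDiagonal a → isDiagonal b → p a ≠ none → p b ≠ none → ¬ crosses a b)

/-- The ordinary generating series `G(t)` of these configurations, with coefficient `1`
at `t^1`. -/
noncomputable def dualSeries (M : Type) : PowerSeries ℤ :=
  PowerSeries.mk fun n =>
    if n = 1 then 1
    else if n < 2 then 0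
    else (Nat.card {p : Arc n → Option (M × M) // IsDualConfig p} : ℤ)

/-!
A configuration is determined by the labels of its `n + 1` edges and base (`m` choices each)
together with the dissection formed by its solid diagonals, labelled by the `ℓ = m² - m`
off-diagonal pairs. Hence `g_n = m ^ (n + 1) h_n`, where `h_n` counts `ℓ`-labelled dissections of
the `(n + 1)`-gon; that is, `G(t) = m H(m t) + (1 - m²) t` with `H = ∑ h_n t ^ n`.

A dissection splits at its cut vertex `j`, the last vertex joined to `0` by a solid diagonal
(`j = 1` if there is none). No solid diagonal passes over `j`, so the dissection is glued from a
dissection of `[0, j]` whose base `(0, j)` is solid (unless `j = 1`) and a dissection of `[j, n]`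
whose base `(j, n)` is free (unless `n - j = 1`). This gives
`H = t + (t + ℓ (H - t)) (t + (ℓ + 1) (H - t))`, and eliminating `H` yields the quadratic equation
for `G`.
-/

namespace Arc

variable {n j k : ℕ}

def fst (a : Arc n) : ℕ := a.val.1

def snd (a : Arc n) : ℕ := a.val.2

def mk (x y : ℕ) (hxy : x < y) (hy : y ≤ n) : Arc n :=
  ⟨(⟨x, by omega⟩, ⟨y, by omega⟩), Fin.mk_lt_mk.2 hxy⟩

@[simp] lemma fst_mk {x y : ℕ} (hxy : x < y) (hy : y ≤ n) : (mk x y hxy hy).fst = x := rfl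

@[simp] lemma snd_mk {x y : ℕ} (hxy : x < y) (hy : y ≤ n) : (mk x y hxy hy).snd = y := rfl

lemma fst_lt_snd (a : Arc n) : a.fst < a.snd := a.2

lemma snd_le (a : Arc n) : a.snd ≤ n := Nat.lt_succ_iff.1 a.val.2.2

@[ext] lemma ext {a b : Arc n} (h₁ : a.fst = b.fst) (h₂ : a.snd = b.snd) : a = b :=
  Subtype.ext (Prod.ext (Fin.ext h₁) (Fin.ext h₂))

lemma isBase_iff {a : Arc n} : isBase a ↔ a.fst = 0 ∧ a.snd = n := Iff.rfl

lemma isEdge_iff {a : Arc n} : isEdge a ↔ a.snd = a.fst + 1 ∧ ¬(a.fst = 0 ∧ a.snd = n) := Iff.rfl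

lemma isDiagonal_iff {a : Arc n} :
    isDiagonal a ↔ a.snd ≠ a.fst + 1 ∧ ¬(a.fst = 0 ∧ a.snd = n) := by
  rw [isDiagonal, isEdge_iff, isBase_iff]
  tauto

lemma crosses_iff {a b : Arc n} :
    crosses a b ↔ a.fst < b.fst ∧ b.fst < a.snd ∧ a.snd < b.snd := Iff.rfl

instance : DecidablePred (isDiagonal (n := n)) := fun _ => decidable_of_iff' _ isDiagonal_iff

def base (hn : 0 < n) : Arc n := mk 0 n hn le_rfl

lemma isBase_base (hn : 0 < n) : isBase (base hn) := ⟨rfl, rfl⟩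

lemma eq_base_of_isBase (hn : 0 < n) {a : Arc n} (ha : isBase a) : a = base hn := ext ha.1 ha.2

lemma not_crosses_base_left (hn : 0 < n) (b : Arc n) : ¬ crosses (base hn) b := by
  have := b.snd_le
  rw [crosses_iff]
  simp only [base, fst_mk, snd_mk]
  omega

lemma not_crosses_base_right (hn : 0 < n) (a : Arc n) : ¬ crosses a (base hn) := by
  rw [crosses_iff]
  simp only [base, fst_mk]
  omega

def castLE (h : j ≤ n) (a : Arc j) : Arc n := mk a.fst a.snd a.fst_lt_snd (a.snd_le.trans h)

def natAdd (j : ℕ) (a : Arc k) : Arc (j + k) :=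
  mk (j + a.fst) (j + a.snd) (by have := a.fst_lt_snd; omega) (by have := a.snd_le; omega)

@[simp] lemma fst_castLE (h : j ≤ n) (a : Arc j) : (castLE h a).fst = a.fst := rfl

@[simp] lemma snd_castLE (h : j ≤ n) (a : Arc j) : (castLE h a).snd = a.snd := rfl

@[simp] lemma fst_natAdd (a : Arc k) : (natAdd j a).fst = j + a.fst := rfl

@[simp] lemma snd_natAdd (a : Arc k) : (natAdd j a).snd = j + a.snd := rfl

lemma crosses_castLE (h : j ≤ n) {a b : Arc j} : crosses (castLE h a) (castLE h b) ↔ crosses a b :=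
  Iff.rfl

lemma crosses_natAdd {a b : Arc k} : crosses (natAdd j a) (natAdd j b) ↔ crosses a b := by
  simp only [crosses_iff, fst_natAdd, snd_natAdd]
  omega

end Arc

section

variable {L : Type*} {n j k : ℕ}

def HasNoncrossingSupport (d : Arc n → Option L) : Prop :=
  ∀ a b, d a ≠ none → d b ≠ none → ¬ crosses a b

def IsDissection (d : Arc n → Option L) : Prop :=
  (∀ a, ¬ isDiagonal a → d a = none) ∧ HasNoncrossingSupport d

abbrev Dissection (L : Type*) (n : ℕ) : Type _ := {d : Arc n → Option L // IsDissection d}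

def IsDissectionWithBase (P : Option L → Prop) (d : Arc n → Option L) : Prop :=
  (∀ a, isEdge a → d a = none) ∧ (∀ a, isBase a → P (d a)) ∧ HasNoncrossingSupport d

lemma Dissection.eq_none_of_snd_eq (d : Dissection L n) {a : Arc n} (ha : a.snd = a.fst + 1) :
    d.1 a = none :=
  d.2.1 a fun h => (Arc.isDiagonal_iff.1 h).1 ha

lemma IsDissectionWithBase.eq_none_of_snd_eq {P : Option L → Prop} {d : Arc n → Option L}
    (hd : IsDissectionWithBase P d) (hP : n = 1 → ∀ ℓ, P ℓ → ℓ = none) {a : Arc n}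
    (ha : a.snd = a.fst + 1) : d a = none := by
  by_cases hb : isBase a
  · exact hP (by rw [Arc.isBase_iff] at hb; omega) _ (hd.2.1 a hb)
  · exact hd.1 a ⟨ha, hb⟩

lemma HasNoncrossingSupport.update_base {d : Arc n → Option L} (hd : HasNoncrossingSupport d)
    (hn : 0 < n) (ℓ : Option L) : HasNoncrossingSupport (Function.update d (Arc.base hn) ℓ) := by
  intro a b ha hb
  by_cases hab : a = Arc.base hn
  · exact hab ▸ Arc.not_crosses_base_left hn b
  by_cases hbb : b = Arc.base hn
  · exact hbb ▸ Arc.not_crosses_base_right hn a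
  rw [Function.update_of_ne hab] at ha
  rw [Function.update_of_ne hbb] at hb
  exact hd a b ha hb

lemma IsDissectionWithBase.isDissection_update {P : Option L → Prop} {d : Arc n → Option L}
    (hd : IsDissectionWithBase P d) (hn : 0 < n) :
    IsDissection (Function.update d (Arc.base hn) none) := by
  refine ⟨fun a ha => ?_, hd.2.2.update_base hn none⟩
  by_cases hb : a = Arc.base hn
  · rw [hb, Function.update_self]
  · rw [Function.update_of_ne hb]
    exact hd.1 a (not_not.1 fun he => ha ⟨he, fun hb' => hb (Arc.eq_base_of_isBase hn hb')⟩)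

lemma IsDissection.isDissectionWithBase_update {P : Option L → Prop} {d : Arc n → Option L}
    (hd : IsDissection d) (hn : 0 < n) {ℓ : Option L} (hℓ : P ℓ) :
    IsDissectionWithBase P (Function.update d (Arc.base hn) ℓ) := by
  refine ⟨fun a ha => ?_, fun a ha => ?_, hd.2.update_base hn ℓ⟩
  · rw [Function.update_of_ne (show a ≠ Arc.base hn from fun h => ha.2 (h ▸ Arc.isBase_base hn))]
    exact hd.1 a fun h => h.1 ha
  · rwa [Arc.eq_base_of_isBase hn ha, Function.update_self]

def baseSplitEquiv (P : Option L → Prop) (hn : 0 < n) :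
    {d : Arc n → Option L // IsDissectionWithBase P d} ≃ {ℓ // P ℓ} × Dissection L n where
  toFun d := (⟨d.1 (Arc.base hn), d.2.2.1 _ (Arc.isBase_base hn)⟩,
    ⟨Function.update d.1 (Arc.base hn) none, d.2.isDissection_update hn⟩)
  invFun p :=
    ⟨Function.update p.2.1 (Arc.base hn) p.1.1, p.2.2.isDissectionWithBase_update hn p.1.2⟩
  left_inv d := by
    ext1
    simp
  right_inv p := by
    ext1
    · simp
    · ext1
      simp [Function.update_eq_self_iff, p.2.2.1 _ fun h => h.2 (Arc.isBase_base hn)]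

lemma card_dissectionWithBase (P : Option L → Prop) (hn : 0 < n) :
    Nat.card {d : Arc n → Option L // IsDissectionWithBase P d} =
      Nat.card {ℓ // P ℓ} * Nat.card (Dissection L n) := by
  rw [Nat.card_congr (baseSplitEquiv P hn), Nat.card_prod]

lemma card_dissection_one : Nat.card (Dissection L 1) = 1 := by
  have h_none (a : Arc 1) : ¬ isDiagonal a := fun h => by
    have := a.fst_lt_snd; have := a.snd_le; rw [Arc.isDiagonal_iff] at h; omega
  have : Subsingleton (Dissection L 1) := ⟨fun d d' =>
    Subtype.ext (funext fun a => (d.2.1 a (h_none a)).trans (d'.2.1 a (h_none a)).symm)⟩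
  have : Nonempty (Dissection L 1) := ⟨⟨fun _ => none, fun _ _ => rfl, fun _ _ h => (h rfl).elim⟩⟩
  exact Nat.card_unique

lemma card_subtype_eq_none_iff : Nat.card {ℓ : Option L // ℓ = none ↔ j = 1} =
    if j = 1 then 1 else Nat.card L := by
  split_ifs with hj
  · simp [hj]
  · simp [hj, Option.ne_none_iff_isSome, Nat.card_congr (Equiv.optionIsSomeEquiv L)]

lemma card_subtype_imp_eq_none [Finite L] : Nat.card {ℓ : Option L // k = 1 → ℓ = none} =
    if k = 1 then 1 else Nat.card L + 1 := by
  split_ifs with hk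
  · simp [hk]
  · have := Fintype.ofFinite L
    simp [hk, Nat.card_eq_fintype_card]

namespace Dissection

noncomputable def cut (d : Dissection L n) : ℕ :=
  open Classical in
  Nat.findGreatest (fun j => j = 1 ∨ ∃ a : Arc n, a.fst = 0 ∧ a.snd = j ∧ d.1 a ≠ none) (n - 1)

lemma one_le_cut (hn : 2 ≤ n) (d : Dissection L n) : 1 ≤ cut d :=
  Nat.le_findGreatest (by omega) (Or.inl rfl)

lemma cut_lt (hn : 2 ≤ n) (d : Dissection L n) : cut d < n :=
  (Nat.findGreatest_le _).trans_lt (by omega)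

lemma cut_eq_one_or_solid (hn : 2 ≤ n) (d : Dissection L n) :
    cut d = 1 ∨ ∃ a : Arc n, a.fst = 0 ∧ a.snd = cut d ∧ d.1 a ≠ none :=
  Nat.findGreatest_spec (P := fun j => j = 1 ∨ ∃ a : Arc n, a.fst = 0 ∧ a.snd = j ∧ d.1 a ≠ none)
    (m := 1) (by omega) (Or.inl rfl)

lemma eq_none_of_cut_lt (d : Dissection L n) {a : Arc n} (h₀ : a.fst = 0) (hcut : cut d < a.snd)
    (hsnd : a.snd < n) : d.1 a = none := by
  by_contra ha
  exact Nat.findGreatest_is_greatest hcut (by omega) (Or.inr ⟨a, h₀, rfl, ha⟩)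

lemma snd_le_cut_or_cut_le_fst (hn : 2 ≤ n) (d : Dissection L n) {a : Arc n} (ha : d.1 a ≠ none) :
    a.snd ≤ cut d ∨ cut d ≤ a.fst := by
  by_contra! h
  by_cases h₀ : a.fst = 0
  · have hsnd : a.snd ≠ n := fun hs => ha (d.2.1 a fun hd => (Arc.isDiagonal_iff.1 hd).2 ⟨h₀, hs⟩)
    exact ha (eq_none_of_cut_lt d h₀ h.1 (lt_of_le_of_ne a.snd_le hsnd))
  · obtain hc | ⟨b, hb₀, hbc, hb⟩ := cut_eq_one_or_solid hn d
    · omega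
    · exact d.2.2 b a hb ha (Arc.crosses_iff.2 (by omega))

def glue (e : Arc j → Option L) (f : Arc k → Option L) (a : Arc (j + k)) : Option L :=
  if h : a.snd ≤ j then e (Arc.mk a.fst a.snd a.fst_lt_snd h)
  else if h' : j ≤ a.fst then
    f (Arc.mk (a.fst - j) (a.snd - j) (by have := a.fst_lt_snd; omega) (by have := a.snd_le; omega))
  else none

variable {e : Arc j → Option L} {f : Arc k → Option L}

lemma glue_of_snd_le {a : Arc (j + k)} (h : a.snd ≤ j) :
    glue e f a = e (Arc.mk a.fst a.snd a.fst_lt_snd h) :=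
  dif_pos h

lemma glue_of_le_fst {a : Arc (j + k)} (h : j ≤ a.fst) :
    glue e f a = f (Arc.mk (a.fst - j) (a.snd - j) (by have := a.fst_lt_snd; omega)
      (by have := a.snd_le; omega)) := by
  have := a.fst_lt_snd
  rw [glue, dif_neg (by omega), dif_pos h]

lemma glue_castLE (a : Arc j) : glue e f (a.castLE (Nat.le_add_right j k)) = e a :=
  glue_of_snd_le (k := k) a.snd_le

lemma glue_natAdd (a : Arc k) : glue e f (a.natAdd j) = f a := by
  rw [glue_of_le_fst (by simp)]
  congr 1
  ext <;> simp

lemma glue_of_lt_of_lt {a : Arc (j + k)} (h₁ : a.fst < j) (h₂ : j < a.snd) : glue e f a = none := by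
  rw [glue, dif_neg (by omega), dif_neg (by omega)]

lemma glue_comp_castLE_natAdd (hn : 2 ≤ j + k) (d : Dissection L (j + k)) (hd : cut d = j) :
    glue (fun a => d.1 (a.castLE (Nat.le_add_right j k))) (fun a => d.1 (a.natAdd j)) = d.1 := by
  funext a
  have := a.fst_lt_snd
  unfold glue
  split_ifs with h₁ h₂
  · exact congrArg d.1 (Arc.ext rfl rfl)
  · exact congrArg d.1 (Arc.ext (by simp; omega) (by simp; omega))
  · by_contra ha
    have := snd_le_cut_or_cut_le_fst hn d (Ne.symm ha)
    omega

lemma isDissectionWithBase_comp_castLE (hn : 2 ≤ j + k) (d : Dissection L (j + k))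
    (hd : cut d = j) :
    IsDissectionWithBase (· = none ↔ j = 1) fun a => d.1 (a.castLE (Nat.le_add_right j k)) := by
  refine ⟨fun a ha => d.eq_none_of_snd_eq (Arc.isEdge_iff.1 ha).1, fun a ha => ?_,
    fun a b ha hb hab => d.2.2 _ _ ha hb ((Arc.crosses_castLE _).2 hab)⟩
  obtain ⟨h₀, hj⟩ := Arc.isBase_iff.1 ha
  refine ⟨fun hnone => ?_, fun hj₁ => d.eq_none_of_snd_eq (by simp; omega)⟩
  obtain hc | ⟨b, hb₀, hbc, hb⟩ := cut_eq_one_or_solid hn d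
  · omega
  · rw [show b = a.castLE (Nat.le_add_right j k) from Arc.ext (by simp [hb₀, h₀]) (by simp [hbc, hd, hj])] at hb
    exact absurd hnone hb

lemma isDissectionWithBase_comp_natAdd (d : Dissection L (j + k)) :
    IsDissectionWithBase (k = 1 → · = none) fun a => d.1 (a.natAdd j) := by
  refine ⟨fun a ha => d.eq_none_of_snd_eq ?_, fun a ha hk => d.eq_none_of_snd_eq ?_,
    fun a b ha hb hab => d.2.2 _ _ ha hb (Arc.crosses_natAdd.2 hab)⟩
  · simp [(Arc.isEdge_iff.1 ha).1]
    omega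
  · obtain ⟨h₀, hk'⟩ := Arc.isBase_iff.1 ha
    simp
    omega

lemma isDissection_glue (he : IsDissectionWithBase (· = none ↔ j = 1) e)
    (hf : IsDissectionWithBase (k = 1 → · = none) f) (hj : 1 ≤ j) (hk : 1 ≤ k) :
    IsDissection (glue e f) := by
  have he' (a : Arc j) : a.snd = a.fst + 1 → e a = none :=
    he.eq_none_of_snd_eq fun hj ℓ hℓ => hℓ.2 hj
  have hf' (a : Arc k) : a.snd = a.fst + 1 → f a = none :=
    hf.eq_none_of_snd_eq fun hk ℓ hℓ => hℓ hk
  have hside (c : Arc (j + k)) (hc : glue e f c ≠ none) : c.snd ≤ j ∨ j ≤ c.fst := by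
    by_contra! h
    exact hc (glue_of_lt_of_lt h.2 h.1)
  refine ⟨fun a ha => ?_, fun a b ha hb hab => ?_⟩
  · rw [Arc.isDiagonal_iff, not_and_or, not_not, not_not] at ha
    rcases ha with hsucc | ⟨h₀, hn⟩
    · by_contra hne
      rcases hside a hne with h | h
      · exact hne (by rw [glue_of_snd_le h]; exact he' _ (by simp [hsucc]))
      · exact hne (by rw [glue_of_le_fst h]; exact hf' _ (by simp; omega))
    · exact glue_of_lt_of_lt (by omega) (by omega)
  · have := a.fst_lt_snd
    have := b.fst_lt_snd
    rw [Arc.crosses_iff] at hab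
    rcases hside a ha with ha' | ha' <;> rcases hside b hb with hb' | hb'
    · rw [glue_of_snd_le ha'] at ha
      rw [glue_of_snd_le hb'] at hb
      exact he.2.2 _ _ ha hb (Arc.crosses_iff.2 (by simpa using hab))
    · omega
    · omega
    · rw [glue_of_le_fst ha'] at ha
      rw [glue_of_le_fst hb'] at hb
      exact hf.2.2 _ _ ha hb (Arc.crosses_iff.2 (by simp; omega))

lemma cut_glue (he : IsDissectionWithBase (· = none ↔ j = 1) e)
    (hf : IsDissectionWithBase (k = 1 → · = none) f) (hj : 1 ≤ j) (hk : 1 ≤ k) :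
    cut ⟨glue e f, isDissection_glue he hf hj hk⟩ = j := by
  refine Nat.findGreatest_eq_iff.2 ⟨by omega, fun _ => ?_, fun y hy hy' => ?_⟩
  · by_cases hj₁ : j = 1
    · exact Or.inl hj₁
    · refine Or.inr ⟨(Arc.base (by omega)).castLE (Nat.le_add_right j k), rfl, rfl, ?_⟩
      change glue e f _ ≠ none
      rw [glue_castLE]
      exact mt (he.2.1 _ (Arc.isBase_base _)).1 hj₁
  · rintro (rfl | ⟨a, h₀, rfl, ha⟩)
    · omega
    · exact ha (glue_of_lt_of_lt (by omega) hy)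

def cutFiberEquiv (hj : 1 ≤ j) (hk : 1 ≤ k) :
    {d : Dissection L (j + k) // cut d = j} ≃
      {e : Arc j → Option L // IsDissectionWithBase (· = none ↔ j = 1) e} ×
        {f : Arc k → Option L // IsDissectionWithBase (k = 1 → · = none) f} where
  toFun d := (⟨_, isDissectionWithBase_comp_castLE (by omega) d.1 d.2⟩,
    ⟨_, isDissectionWithBase_comp_natAdd d.1⟩)
  invFun p := ⟨⟨glue p.1.1 p.2.1, isDissection_glue p.1.2 p.2.2 hj hk⟩, cut_glue p.1.2 p.2.2 hj hk⟩
  left_inv d := Subtype.ext (Subtype.ext (glue_comp_castLE_natAdd (by omega) d.1 d.2))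
  right_inv p := Prod.ext (Subtype.ext (funext glue_castLE)) (Subtype.ext (funext glue_natAdd))

lemma card_cut_eq [Finite L] (hj : 1 ≤ j) (hk : 1 ≤ k) :
    Nat.card {d : Dissection L (j + k) // cut d = j} =
      ((if j = 1 then 1 else Nat.card L) * Nat.card (Dissection L j)) *
        ((if k = 1 then 1 else Nat.card L + 1) * Nat.card (Dissection L k)) := by
  rw [Nat.card_congr (cutFiberEquiv hj hk), Nat.card_prod, card_dissectionWithBase _ hj,
    card_dissectionWithBase _ hk, card_subtype_eq_none_iff, card_subtype_imp_eq_none]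

end Dissection

theorem card_dissection_eq_sum [Finite L] (hn : 2 ≤ n) :
    Nat.card (Dissection L n) = ∑ j ∈ Finset.Ioo 0 n,
      ((if j = 1 then 1 else Nat.card L) * Nat.card (Dissection L j)) *
        ((if n - j = 1 then 1 else Nat.card L + 1) * Nat.card (Dissection L (n - j))) := by
  classical
  have := Fintype.ofFinite (Dissection L n)
  rw [Nat.card_eq_fintype_card, ← Finset.card_univ, Finset.card_eq_sum_card_fiberwise
    (f := Dissection.cut) (t := Finset.Ioo 0 n)
    fun d _ => Finset.mem_Ioo.2 ⟨d.one_le_cut hn, d.cut_lt hn⟩]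
  refine Finset.sum_congr rfl fun j hj => ?_
  obtain ⟨hj₀, hjn⟩ := Finset.mem_Ioo.1 hj
  obtain ⟨k, rfl⟩ := Nat.exists_eq_add_of_le hjn.le
  rw [← Dissection.card_cut_eq hj₀ (by omega), Nat.add_sub_cancel_left,
    Nat.card_eq_fintype_card, Fintype.card_subtype]

end

section DualConfig

variable {M : Type} {n : ℕ}

abbrev OffDiag (M : Type) : Type := {q : M × M // q.1 ≠ q.2}

def dualConfigEquiv : {p : Arc n → Option (M × M) // IsDualConfig p} ≃
    ({a : Arc n // ¬ isDiagonal a} → M) × Dissection (OffDiag M) n where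
  toFun p := (fun a => ((p.1 a).get (by obtain ⟨c, hc⟩ := p.2.1 a a.2; simp [hc])).1,
    ⟨fun a => if h : isDiagonal a then
        (p.1 a).pmap Subtype.mk fun q hq => p.2.2.1 a h q.1 q.2 hq else none,
      fun a ha => dif_neg ha, fun a b ha hb => by
        dsimp only at ha hb
        split_ifs at ha hb with h₁ h₂ <;>
          simp only [ne_eq, Option.pmap_eq_none_iff, not_true_eq_false] at ha hb
        exact p.2.2.2 a b h₁ h₂ ha hb⟩)
  invFun c := ⟨fun a => if h : isDiagonal a then (c.2.1 a).map Subtype.val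
      else some (c.1 ⟨a, h⟩, c.1 ⟨a, h⟩),
    fun a ha => ⟨_, dif_neg ha⟩,
    fun a ha x y hxy => by
      dsimp only at hxy
      rw [dif_pos ha, Option.map_eq_some_iff] at hxy
      obtain ⟨q, -, hq⟩ := hxy
      simpa [hq] using q.2,
    fun a b ha hb hpa hpb => by
      simp only [dif_pos ha, dif_pos hb, ne_eq, Option.map_eq_none_iff] at hpa hpb
      exact c.2.2.2 a b hpa hpb⟩
  left_inv p := by
    ext1
    funext a
    by_cases h : isDiagonal a
    · simp [h, Option.map_pmap]
    · obtain ⟨c, hc⟩ := p.2.1 a h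
      simp [h, hc]
  right_inv c := by
    refine Prod.ext (funext fun a => by simp [a.2]) (Subtype.ext (funext fun a => ?_))
    by_cases h : isDiagonal a
    · simp [h, Option.pmap_map, Option.pmap_eq_map]
    · simp [h, c.2.2.1 a h]

lemma card_not_isDiagonal (hn : 2 ≤ n) : Nat.card {a : Arc n // ¬ isDiagonal a} = n + 1 := by
  let g : Fin (n + 1) → {a : Arc n // ¬ isDiagonal a} := fun i =>
    if h : i.1 < n then ⟨Arc.mk i (i + 1) (by omega) h, fun hd => (Arc.isDiagonal_iff.1 hd).1 rfl⟩
    else ⟨Arc.base (by omega), fun hd => (Arc.isDiagonal_iff.1 hd).2 ⟨rfl, rfl⟩⟩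
  have hg : Function.Bijective g := by
    refine ⟨fun i i' hii' => ?_, fun ⟨a, ha⟩ => ?_⟩
    · have h₁ := congrArg (fun a => a.1.fst) hii'
      have h₂ := congrArg (fun a => a.1.snd) hii'
      simp only [g] at h₁ h₂
      split_ifs at h₁ h₂ <;> simp only [Arc.base, Arc.fst_mk, Arc.snd_mk] at h₁ h₂ <;> ext <;> omega
    · have := a.fst_lt_snd
      have := a.snd_le
      rw [Arc.isDiagonal_iff, not_and_or, not_not, not_not] at ha
      by_cases hb : a.fst = 0 ∧ a.snd = n
      · exact ⟨Fin.last n, Subtype.ext (by simp [g, Arc.base]; ext <;> simp [hb])⟩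
      · refine ⟨⟨a.fst, by omega⟩, Subtype.ext ?_⟩
        simp only [g, dif_pos (show a.fst < n by omega)]
        ext <;> simp
        omega
  rw [← Nat.card_eq_of_bijective g hg, Nat.card_eq_fintype_card, Fintype.card_fin]

lemma card_dualConfig (hn : 2 ≤ n) :
    Nat.card {p : Arc n → Option (M × M) // IsDualConfig p} =
      Nat.card M ^ (n + 1) * Nat.card (Dissection (OffDiag M) n) := by
  rw [Nat.card_congr dualConfigEquiv, Nat.card_prod, Nat.card_fun, card_not_isDiagonal hn]

lemma card_offDiag [Fintype M] : (Nat.card (OffDiag M) : ℤ) = Nat.card M ^ 2 - Nat.card M := by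
  classical
  have : (Finset.univ.filter fun q : M × M => q.1 ≠ q.2) = Finset.univ.offDiag := by
    ext
    simp
  rw [Nat.card_eq_fintype_card, Fintype.card_subtype, this, Finset.offDiag_card,
    Finset.card_univ, Nat.card_eq_fintype_card, Nat.cast_sub (Nat.le_mul_self _)]
  push_cast
  ring

end DualConfig

section Series

open PowerSeries

lemma PowerSeries.coeff_mul_eq_sum_Ioo {R : Type*} [CommSemiring R] {f g : R⟦X⟧}
    (hf : constantCoeff f = 0) (hg : constantCoeff g = 0) (n : ℕ) :
    coeff n (f * g) = ∑ j ∈ Finset.Ioo 0 n, coeff j f * coeff (n - j) g := by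
  rw [coeff_mul, Finset.Nat.sum_antidiagonal_eq_sum_range_succ fun i k => coeff i f * coeff k g]
  refine (Finset.sum_subset (fun j hj => ?_) fun j hj hj' => ?_).symm
  · simp only [Finset.mem_Ioo, Finset.mem_range] at hj ⊢
    omega
  · simp only [Finset.mem_Ioo, Finset.mem_range] at hj hj'
    obtain rfl | rfl : j = 0 ∨ j = n := by omega
    · simp [hf]
    · simp [hg]

variable {L : Type*}

noncomputable def dissectionSeries (L : Type*) : ℤ⟦X⟧ :=
  mk fun n => if n = 0 then 0 else (Nat.card (Dissection L n) : ℤ)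

@[simp] lemma constantCoeff_dissectionSeries : constantCoeff (dissectionSeries L) = 0 := rfl

lemma coeff_dissectionSeries {n : ℕ} (hn : n ≠ 0) :
    coeff n (dissectionSeries L) = Nat.card (Dissection L n) := by
  simp [dissectionSeries, hn]

lemma coeff_X_add_C_mul_dissectionSeries_sub_X (c : ℤ) {i : ℕ} (hi : 1 ≤ i) :
    coeff i (X + C c * (dissectionSeries L - X)) =
      (if i = 1 then 1 else c) * Nat.card (Dissection L i) := by
  rw [map_add, coeff_C_mul, map_sub, coeff_X, coeff_dissectionSeries (by omega)]
  split_ifs with h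
  · simp [h, card_dissection_one]
  · ring

theorem dissectionSeries_eq [Finite L] :
    dissectionSeries L = X + (X + C (Nat.card L : ℤ) * (dissectionSeries L - X)) *
      (X + C (Nat.card L + 1 : ℤ) * (dissectionSeries L - X)) := by
  ext n
  rw [map_add, coeff_mul_eq_sum_Ioo (by simp) (by simp)]
  obtain rfl | rfl | hn : n = 0 ∨ n = 1 ∨ 2 ≤ n := by omega
  · simp
  · simp [coeff_dissectionSeries, card_dissection_one, show Finset.Ioo 0 1 = ∅ from rfl]
  · rw [coeff_X, if_neg (by omega), zero_add, coeff_dissectionSeries (by omega),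
      card_dissection_eq_sum hn]
    push_cast
    refine Finset.sum_congr rfl fun j hj => ?_
    rw [Finset.mem_Ioo] at hj
    rw [coeff_X_add_C_mul_dissectionSeries_sub_X _ hj.1,
      coeff_X_add_C_mul_dissectionSeries_sub_X _ (by omega)]

lemma dualSeries_eq (M : Type) :
    dualSeries M = C (Nat.card M : ℤ) * rescale (Nat.card M : ℤ) (dissectionSeries (OffDiag M))
      + C (1 - (Nat.card M : ℤ) ^ 2) * X := by
  ext n
  rw [map_add, coeff_C_mul, coeff_C_mul, coeff_rescale, coeff_X]
  obtain rfl | rfl | hn : n = 0 ∨ n = 1 ∨ 2 ≤ n := by omega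
  · simp [dualSeries]
  · simp [dualSeries, coeff_dissectionSeries, card_dissection_one]
    ring
  · simp [dualSeries, coeff_dissectionSeries, card_dualConfig hn, show n ≠ 0 by omega,
      show n ≠ 1 by omega, show ¬ n ≤ 1 by omega]
    ring

end Series

theorem stmt19_general (M : Type) [Fintype M] :
    (PowerSeries.X : PowerSeries ℤ)
      + (((Fintype.card M : ℤ) - 1 : ℤ) : PowerSeries ℤ) * PowerSeries.X ^ 2
      + (((2 * (Fintype.card M : ℤ) ^ 2 : ℤ) : PowerSeries ℤ) * PowerSeries.X
          - ((3 * (Fintype.card M : ℤ) : ℤ) : PowerSeries ℤ) * PowerSeries.X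
          + 2 * PowerSeries.X - 1) * dualSeries M
      + (((Fintype.card M : ℤ) ^ 3 - 2 * (Fintype.card M : ℤ) ^ 2
            + 2 * (Fintype.card M : ℤ) - 1 : ℤ) : PowerSeries ℤ) * dualSeries M ^ 2
      = 0 := by
  have hH := congrArg (PowerSeries.rescale (Nat.card M : ℤ)) (dissectionSeries_eq (L := OffDiag M))
  rw [card_offDiag] at hH
  rw [dualSeries_eq, ← Nat.card_eq_fintype_card]
  simp only [map_add, map_mul, map_sub, eq_intCast, map_intCast, PowerSeries.rescale_X] at hH ⊢
  push_cast at hH ⊢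
  linear_combination (-(Nat.card M : PowerSeries ℤ)) * hH

/-- For a finite unitary magma `M` of cardinality `m`, the generating series `G` of
noncrossing configurations whose edges and base are labeled by pairs `(a, a)` and whose
solid diagonals are labeled by pairs `(a, b)` with `a ≠ b` satisfies
`t + (m - 1) t² + (2m² t - 3m t + 2t - 1) G + (m³ - 2m² + 2m - 1) G² = 0`. -/
theorem stmt19 (M : Type) [Fintype M] [MulOneClass M] :
    (PowerSeries.X : PowerSeries ℤ)
      + (((Fintype.card M : ℤ) - 1 : ℤ) : PowerSeries ℤ) * PowerSeries.X ^ 2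
      + (((2 * (Fintype.card M : ℤ) ^ 2 : ℤ) : PowerSeries ℤ) * PowerSeries.X
          - ((3 * (Fintype.card M : ℤ) : ℤ) : PowerSeries ℤ) * PowerSeries.X
          + 2 * PowerSeries.X - 1) * dualSeries M
      + (((Fintype.card M : ℤ) ^ 3 - 2 * (Fintype.card M : ℤ) ^ 2
            + 2 * (Fintype.card M : ℤ) - 1 : ℤ) : PowerSeries ℤ) * dualSeries M ^ 2
      = 0 :=
  stmt19_general M
end
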